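/- Let X ∈ ℝ^{p×n} (p ≥ 2), let S = (1/n) X Xᵀ have eigenvalues ℓ_1 ≥ ... ≥ ℓ_p, and let 0 < q_1 < ... < q_d < p be a signature. Then the minimization of the criterion F(S_1,...,S_d) = ‖X − (1/d) Σ_{k=1}^d Π_{S_k} X‖_F² over all flags S_1 ⊆ ... ⊆ S_d of ℝ^p with dim S_k = q_k admits a unique minimizing flag if and only if ℓ_{q_k} ≠ ℓ_{q_k + 1} for every k ∈ {1, ..., d}. -/

import Mathlib

open Matrix Finset

/-- The squared Frobenius norm of a real matrix. -/
noncomputable def frobSq {p n : ℕ} (M : Matrix (Fin p) (Fin n) ℝ) : ℝ :=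
  Matrix.trace (Mᵀ * M)

/-- `P k`, for `k = 1, …, d`, are the orthogonal projection matrices onto a flag
`S_1 ⊆ ⋯ ⊆ S_d` of subspaces of `ℝ^p` with `dim S_k = q k`: each `P k` is a symmetric
idempotent of rank `q k`, and nestedness is `P l * P k = P k` for `k ≤ l`. -/
def IsProjFlag (p d : ℕ) (q : ℕ → ℕ) (P : ℕ → Matrix (Fin p) (Fin p) ℝ) : Prop :=
  (∀ k, 1 ≤ k → k ≤ d → (P k).IsSymm) ∧
  (∀ k, 1 ≤ k → k ≤ d → P k * P k = P k) ∧
  (∀ k, 1 ≤ k → k ≤ d → (P k).rank = q k) ∧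
  (∀ k l, 1 ≤ k → k ≤ l → l ≤ d → P l * P k = P k)

/-- Outer product `u_j u_jᵀ` of the `j`-th column of `U`. -/
noncomputable def colOuter {p : ℕ} (U : Matrix (Fin p) (Fin p) ℝ) (j : Fin p) :
    Matrix (Fin p) (Fin p) ℝ :=
  Matrix.vecMulVec (fun i => U i j) (fun i => U i j)

/-- Orthogonal projection matrix onto the span of the first `m` columns of `V`
(for `V` with orthonormal columns, this is `∑_{j ≤ m} v_j v_jᵀ`). -/
noncomputable def leadProj {p : ℕ} (V : Matrix (Fin p) (Fin p) ℝ) (m : ℕ) :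
    Matrix (Fin p) (Fin p) ℝ :=
  ∑ j ∈ Finset.univ.filter (fun j : Fin p => (j : ℕ) < m), colOuter V j

/-- Flags indexed by `Fin d` (the `k`-th projector, `k = 0, …, d-1`, has rank `q (k+1)`). -/
def IsProjFlagFin (p d : ℕ) (q : ℕ → ℕ) (P : Fin d → Matrix (Fin p) (Fin p) ℝ) : Prop :=
  (∀ k, (P k).IsSymm) ∧
  (∀ k, P k * P k = P k) ∧
  (∀ k : Fin d, (P k).rank = q ((k : ℕ) + 1)) ∧
  (∀ k l : Fin d, k ≤ l → P l * P k = P k)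


/-! ### Auxiliary lemmas -/

section AuxBasic

lemma isHermitian_of_isSymm' {p : ℕ} {P : Matrix (Fin p) (Fin p) ℝ} (h : P.IsSymm) :
    P.IsHermitian := by
  rw [Matrix.IsHermitian, conjTranspose_eq_transpose_of_trivial, h]

lemma trace_eq_rank_of_symm_idem {p : ℕ} (P : Matrix (Fin p) (Fin p) ℝ)
    (hs : P.IsSymm) (hi : P * P = P) : P.trace = (P.rank : ℝ) := by
  have hH : P.IsHermitian := isHermitian_of_isSymm' hs
  set u : Matrix (Fin p) (Fin p) ℝ := (hH.eigenvectorUnitary : Matrix (Fin p) (Fin p) ℝ) with hu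
  have huu : u * star u = 1 := (Matrix.mem_unitaryGroup_iff).mp hH.eigenvectorUnitary.2
  have huu' : star u * u = 1 := (Matrix.mem_unitaryGroup_iff').mp hH.eigenvectorUnitary.2
  have hdiag : star u * P * u = Matrix.diagonal (RCLike.ofReal ∘ hH.eigenvalues) :=
    (Unitary.conjStarAlgAut_star_apply (S := ℝ) _ _).symm.trans
      hH.conjStarAlgAut_star_eigenvectorUnitary
  have hD : (Matrix.diagonal (RCLike.ofReal ∘ hH.eigenvalues) : Matrix (Fin p) (Fin p) ℝ) *
      Matrix.diagonal (RCLike.ofReal ∘ hH.eigenvalues)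
        = Matrix.diagonal (RCLike.ofReal ∘ hH.eigenvalues) := by
    rw [← hdiag]
    calc (star u * P * u) * (star u * P * u) = star u * (P * ((u * star u) * P)) * u := by
          noncomm_ring
    _ = star u * P * u := by rw [huu, one_mul, hi]
  rw [Matrix.diagonal_mul_diagonal] at hD
  have heig : ∀ i, hH.eigenvalues i = 0 ∨ hH.eigenvalues i = 1 := by
    intro i
    have h3 := congrFun (congrArg (fun M => Matrix.diag M) hD) i
    simp [Function.comp] at h3
    have h2 : hH.eigenvalues i * (hH.eigenvalues i - 1) = 0 := by
      ring_nf
      nlinarith [h3]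
    rcases mul_eq_zero.mp h2 with h | h
    · exact Or.inl h
    · exact Or.inr (by linarith)
  have htr : P.trace = ∑ i, hH.eigenvalues i := by
    have h4 : P = u * Matrix.diagonal (RCLike.ofReal ∘ hH.eigenvalues) * star u :=
      hH.spectral_theorem
    conv_lhs => rw [h4]
    rw [Matrix.trace_mul_comm, ← mul_assoc, huu', one_mul, Matrix.trace_diagonal]
    simp [Function.comp]
  rw [htr, hH.rank_eq_card_non_zero_eigs, Fintype.card_subtype]
  rw [Finset.sum_congr rfl (fun i _ => show hH.eigenvalues i
      = if hH.eigenvalues i ≠ 0 then (1:ℝ) else 0 by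
        rcases heig i with h | h <;> simp [h])]
  rw [Finset.sum_ite, Finset.sum_const, Finset.sum_const]
  simp

lemma card_filter_lt_fin {p m : ℕ} (hm : m ≤ p) :
    (Finset.univ.filter (fun j : Fin p => (j : ℕ) < m)).card = m := by
  rcases Nat.lt_or_ge m p with h | h
  · have : (Finset.univ.filter (fun j : Fin p => (j : ℕ) < m)) = Finset.Iio (⟨m, h⟩ : Fin p) := by
      ext j; simp [Fin.lt_def]
    rw [this, Fin.card_Iio]
  · have hmp : m = p := le_antisymm hm h
    subst hmp
    have : (Finset.univ.filter (fun j : Fin m => (j : ℕ) < m)) = Finset.univ := by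
      ext j; simp [j.isLt]
    rw [this, Finset.card_univ, Fintype.card_fin]

lemma sum_indicator_lt {p m : ℕ} (hm : m ≤ p) :
    ∑ j : Fin p, (if (j : ℕ) < m then (1:ℝ) else 0) = m := by
  rw [Finset.sum_ite, Finset.sum_const, Finset.sum_const]
  simp [card_filter_lt_fin hm]

end AuxBasic
section kyfan
variable {p m : ℕ} (ℓ : ℕ → ℝ) (c : Fin p → ℝ)

lemma kyfan_key (hm : m < p)
    (hsort : ∀ i j : ℕ, 1 ≤ i → i ≤ j → j ≤ p → ℓ j ≤ ℓ i)
    (h0 : ∀ j, 0 ≤ c j) (h1 : ∀ j, c j ≤ 1) (hsum : ∑ j, c j = m) :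
    ∑ j : Fin p, c j * ℓ ((j:ℕ)+1) - ∑ j : Fin p, (if (j:ℕ) < m then (1:ℝ) else 0) * ℓ ((j:ℕ)+1)
      = ∑ j : Fin p, (c j - (if (j:ℕ) < m then (1:ℝ) else 0)) * (ℓ ((j:ℕ)+1) - ℓ (m+1)) := by
  have expand : ∀ j : Fin p,
      (c j - (if (j:ℕ) < m then (1:ℝ) else 0)) * (ℓ ((j:ℕ)+1) - ℓ (m+1))
      = c j * ℓ ((j:ℕ)+1) - (if (j:ℕ) < m then (1:ℝ) else 0) * ℓ ((j:ℕ)+1)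
        - (c j * ℓ (m+1) - (if (j:ℕ) < m then (1:ℝ) else 0) * ℓ (m+1)) := by
    intro j; ring
  rw [Finset.sum_congr rfl (fun j _ => expand j), Finset.sum_sub_distrib,
    Finset.sum_sub_distrib, Finset.sum_sub_distrib, ← Finset.sum_mul, ← Finset.sum_mul,
    hsum, sum_indicator_lt (le_of_lt hm)]
  ring

lemma kyfan_terms_nonpos (hm : m < p)
    (hsort : ∀ i j : ℕ, 1 ≤ i → i ≤ j → j ≤ p → ℓ j ≤ ℓ i)
    (h0 : ∀ j, 0 ≤ c j) (h1 : ∀ j, c j ≤ 1) :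
    ∀ j : Fin p, (c j - (if (j:ℕ) < m then (1:ℝ) else 0)) * (ℓ ((j:ℕ)+1) - ℓ (m+1)) ≤ 0 := by
  intro j
  by_cases hj : (j:ℕ) < m
  · simp only [hj, if_pos]
    apply mul_nonpos_of_nonpos_of_nonneg
    · linarith [h1 j]
    · have := hsort ((j:ℕ)+1) (m+1) (by omega) (by omega) (by omega)
      linarith
  · simp only [hj, if_neg, not_false_iff]
    have := hsort (m+1) ((j:ℕ)+1) (by omega) (by omega) (by omega)
    · have hjp := j.isLt
      have := hsort (m+1) ((j:ℕ)+1) (by omega) (by omega) (by omega)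
      nlinarith [h0 j]

lemma kyfan_le (hm : m < p)
    (hsort : ∀ i j : ℕ, 1 ≤ i → i ≤ j → j ≤ p → ℓ j ≤ ℓ i)
    (h0 : ∀ j, 0 ≤ c j) (h1 : ∀ j, c j ≤ 1) (hsum : ∑ j, c j = m) :
    ∑ j : Fin p, c j * ℓ ((j:ℕ)+1)
      ≤ ∑ j : Fin p, (if (j:ℕ) < m then (1:ℝ) else 0) * ℓ ((j:ℕ)+1) := by
  have key := kyfan_key ℓ c hm hsort h0 h1 hsum
  have hnp := kyfan_terms_nonpos ℓ c hm hsort h0 h1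
  have : ∑ j : Fin p, (c j - (if (j:ℕ) < m then (1:ℝ) else 0)) * (ℓ ((j:ℕ)+1) - ℓ (m+1)) ≤ 0 :=
    Finset.sum_nonpos (fun j _ => hnp j)
  linarith

lemma kyfan_eq_char (hm : m < p)
    (hsort : ∀ i j : ℕ, 1 ≤ i → i ≤ j → j ≤ p → ℓ j ≤ ℓ i)
    (h0 : ∀ j, 0 ≤ c j) (h1 : ∀ j, c j ≤ 1) (hsum : ∑ j, c j = m)
    (hgap : ℓ (m+1) < ℓ m)
    (heq : ∑ j : Fin p, c j * ℓ ((j:ℕ)+1)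
      = ∑ j : Fin p, (if (j:ℕ) < m then (1:ℝ) else 0) * ℓ ((j:ℕ)+1)) :
    ∀ j : Fin p, c j = (if (j:ℕ) < m then (1:ℝ) else 0) := by
  have key := kyfan_key ℓ c hm hsort h0 h1 hsum
  have hnp := kyfan_terms_nonpos ℓ c hm hsort h0 h1
  have hzero : ∀ j ∈ (Finset.univ : Finset (Fin p)),
      (c j - (if (j:ℕ) < m then (1:ℝ) else 0)) * (ℓ ((j:ℕ)+1) - ℓ (m+1)) = 0 := by
    have hs0 : ∑ j : Fin p, (c j - (if (j:ℕ) < m then (1:ℝ) else 0)) * (ℓ ((j:ℕ)+1) - ℓ (m+1)) = 0 := by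
      rw [← key]; linarith
    exact (Finset.sum_eq_zero_iff_of_nonpos (fun j _ => hnp j)).mp hs0
  -- c j = 1 for j < m
  have hone : ∀ j : Fin p, (j:ℕ) < m → c j = 1 := by
    intro j hj
    have hz := hzero j (Finset.mem_univ j)
    simp only [hj, if_pos] at hz
    have hpos : 0 < ℓ ((j:ℕ)+1) - ℓ (m+1) := by
      have h1' : ℓ m ≤ ℓ ((j:ℕ)+1) := hsort ((j:ℕ)+1) m (by omega) (by omega) (by omega)
      linarith
    have := mul_eq_zero.mp hz
    rcases this with h | h
    · linarith
    · linarith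
  -- sum over j < m is m, so rest is zero
  have hrest : ∀ j : Fin p, ¬ ((j:ℕ) < m) → c j = 0 := by
    intro j hj
    have hsplit := Finset.sum_filter_add_sum_filter_not Finset.univ
      (fun j : Fin p => (j:ℕ) < m) c
    have hfirst : ∑ j ∈ Finset.univ.filter (fun j : Fin p => (j:ℕ) < m), c j = m := by
      rw [Finset.sum_congr rfl (fun i hi => hone i (Finset.mem_filter.mp hi).2)]
      simp [card_filter_lt_fin (le_of_lt hm)]
    have hzero2 : ∑ j ∈ Finset.univ.filter (fun j : Fin p => ¬ (j:ℕ) < m), c j = 0 := by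
      rw [hsum] at hsplit; linarith
    have := (Finset.sum_eq_zero_iff_of_nonneg
      (fun i _ => h0 i)).mp hzero2 j (by simp only [Finset.mem_filter, Finset.mem_univ, true_and]; exact hj)
    exact this
  intro j
  by_cases hj : (j:ℕ) < m
  · simp [hj, hone j hj]
  · simp [hj, hrest j hj]
end kyfan
lemma sum_min_fin {d : ℕ} (f : Fin d → ℝ) :
    ∑ k : Fin d, ∑ l : Fin d, f (min k l)
      = ∑ k : Fin d, (2*((d:ℝ) - ((k:ℕ):ℝ)) - 1) * f k := by
  have hsplit : ∀ k l : Fin d, f (min k l)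
      = (if k ≤ l then f k else 0) + (if l < k then f l else 0) := by
    intro k l
    rcases le_or_gt k l with h | h
    · simp [min_eq_left h, h, not_lt.mpr h]
    · simp [min_eq_right (le_of_lt h), h, not_le.mpr h]
  simp_rw [hsplit]
  rw [Finset.sum_congr rfl (fun k _ => Finset.sum_add_distrib), Finset.sum_add_distrib]
  have h1 : ∀ k : Fin d, ∑ l : Fin d, (if k ≤ l then f k else 0)
      = ((d - (k:ℕ) : ℕ) : ℝ) * f k := by
    intro k
    rw [Finset.sum_ite, Finset.sum_const, Finset.sum_const_zero, add_zero]
    have : Finset.univ.filter (fun l : Fin d => k ≤ l) = Finset.Ici k := by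
      ext l; simp
    rw [this, Fin.card_Ici]
    simp
  have h2 : ∑ k : Fin d, ∑ l : Fin d, (if l < k then f l else 0)
      = ∑ l : Fin d, ((d - 1 - (l:ℕ) : ℕ) : ℝ) * f l := by
    rw [Finset.sum_comm]
    refine Finset.sum_congr rfl (fun l _ => ?_)
    rw [Finset.sum_ite, Finset.sum_const, Finset.sum_const_zero, add_zero]
    have : Finset.univ.filter (fun k : Fin d => l < k) = Finset.Ioi l := by
      ext k; simp
    rw [this, Fin.card_Ioi]
    simp
  rw [Finset.sum_congr rfl (fun k _ => h1 k), h2, ← Finset.sum_add_distrib]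
  refine Finset.sum_congr rfl (fun k _ => ?_)
  have hk := k.isLt
  have c1 : ((d - (k:ℕ) : ℕ) : ℝ) = (d:ℝ) - ((k:ℕ):ℝ) := by
    push_cast [Nat.cast_sub (le_of_lt hk)]; ring
  have c2 : ((d - 1 - (k:ℕ) : ℕ) : ℝ) = (d:ℝ) - 1 - ((k:ℕ):ℝ) := by
    have : d - 1 - (k:ℕ) = d - (k+1) := by omega
    rw [this, Nat.cast_sub (by omega)]
    push_cast; ring
  rw [c1, c2]; ring
noncomputable def projDiag (p m : ℕ) : Matrix (Fin p) (Fin p) ℝ :=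
  Matrix.diagonal (fun j : Fin p => if (j:ℕ) < m then (1:ℝ) else 0)

lemma trace_mul_diag {p : ℕ} (Q : Matrix (Fin p) (Fin p) ℝ) (f : Fin p → ℝ) :
    Matrix.trace (Q * Matrix.diagonal f) = ∑ j, Q j j * f j := by
  rw [Matrix.trace]
  refine Finset.sum_congr rfl (fun j _ => ?_)
  simp [Matrix.diag, Matrix.mul_diagonal]

section withV
variable {p : ℕ} {V : Matrix (Fin p) (Fin p) ℝ}

lemma leadProj_eq (V : Matrix (Fin p) (Fin p) ℝ) (m : ℕ) :
    leadProj V m = V * projDiag p m * Vᵀ := by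
  ext a b
  rw [leadProj, Matrix.sum_apply, Finset.sum_filter]
  rw [mul_assoc, Matrix.mul_apply]
  refine Finset.sum_congr rfl (fun j _ => ?_)
  rw [projDiag, Matrix.diagonal_mul]
  by_cases hj : (j:ℕ) < m <;> simp [hj, colOuter, Matrix.vecMulVec_apply, Matrix.transpose_apply,
    mul_comm]

lemma conjV_mul (hV : Vᵀ * V = 1) (M N : Matrix (Fin p) (Fin p) ℝ) :
    (V * M * Vᵀ) * (V * N * Vᵀ) = V * (M * N) * Vᵀ := by
  calc (V * M * Vᵀ) * (V * N * Vᵀ) = V * (M * ((Vᵀ * V) * N)) * Vᵀ := by noncomm_ring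
  _ = V * (M * N) * Vᵀ := by rw [hV, one_mul]

lemma trace_conjV (hV : Vᵀ * V = 1) (M : Matrix (Fin p) (Fin p) ℝ) :
    Matrix.trace (V * M * Vᵀ) = Matrix.trace M := by
  rw [Matrix.trace_mul_comm, ← mul_assoc, hV, one_mul]

lemma projDiag_mul {k l : ℕ} (hkl : k ≤ l) :
    projDiag p l * projDiag p k = projDiag p k := by
  rw [projDiag, projDiag, Matrix.diagonal_mul_diagonal]
  refine congrArg Matrix.diagonal (funext fun j => ?_)
  by_cases hj : (j:ℕ) < k
  · simp [hj, lt_of_lt_of_le hj hkl]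
  · simp [hj]

lemma projDiag_trace {m : ℕ} (hm : m ≤ p) : Matrix.trace (projDiag p m) = m := by
  rw [projDiag, Matrix.trace_diagonal, Finset.sum_ite, Finset.sum_const, Finset.sum_const]
  simp [card_filter_lt_fin hm]

lemma leadProj_isSymm (V : Matrix (Fin p) (Fin p) ℝ) (m : ℕ) : (leadProj V m).IsSymm := by
  rw [leadProj_eq V m, Matrix.IsSymm, Matrix.transpose_mul, Matrix.transpose_mul,
    Matrix.transpose_transpose,
    show (projDiag p m)ᵀ = projDiag p m from (Matrix.isSymm_diagonal _), mul_assoc]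

lemma leadProj_idem (hV : Vᵀ * V = 1) (m : ℕ) :
    leadProj V m * leadProj V m = leadProj V m := by
  rw [leadProj_eq V m, conjV_mul hV, projDiag_mul (le_refl m)]

lemma leadProj_nested (hV : Vᵀ * V = 1) {k l : ℕ} (hkl : k ≤ l) :
    leadProj V l * leadProj V k = leadProj V k := by
  rw [leadProj_eq V l, leadProj_eq V k, conjV_mul hV, projDiag_mul hkl]

end withV
lemma trace_quad {p n' : ℕ} (X : Matrix (Fin p) (Fin n') ℝ) (M : Matrix (Fin p) (Fin p) ℝ) :
    Matrix.trace (Xᵀ * M * X) = Matrix.trace (M * (X * Xᵀ)) := by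
  rw [Matrix.trace_mul_comm, ← Matrix.mul_assoc, Matrix.trace_mul_comm]

lemma frob_expand {p n' : ℕ} (X : Matrix (Fin p) (Fin n') ℝ)
    (B : Matrix (Fin p) (Fin p) ℝ) (hB : B.IsSymm) (c : ℝ) :
    frobSq (X - c • (B * X)) = Matrix.trace (X * Xᵀ)
      - (2*c) * Matrix.trace (B * (X * Xᵀ)) + c^2 * Matrix.trace (B * B * (X * Xᵀ)) := by
  have expand : (X - c • (B * X))ᵀ * (X - c • (B * X))
      = Xᵀ*X - c • (Xᵀ*B*X) - c • (Xᵀ*Bᵀ*X) + (c*c) • (Xᵀ*(Bᵀ*B)*X) := by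
    rw [Matrix.transpose_sub, Matrix.transpose_smul, Matrix.transpose_mul]
    rw [Matrix.sub_mul, Matrix.mul_sub, Matrix.mul_sub]
    simp only [Matrix.smul_mul, Matrix.mul_smul, smul_smul, Matrix.mul_assoc]
    abel
  rw [frobSq, expand]
  rw [Matrix.trace_add, Matrix.trace_sub, Matrix.trace_sub, Matrix.trace_smul,
    Matrix.trace_smul, Matrix.trace_smul]
  rw [trace_quad, trace_quad, trace_quad, hB.eq]
  rw [Matrix.trace_mul_comm Xᵀ X]
  simp only [smul_eq_mul]
  ring

section QAnalysis
variable {p : ℕ}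

lemma leadProj_rank {V : Matrix (Fin p) (Fin p) ℝ} (hV : Vᵀ * V = 1) {m : ℕ} (hm : m ≤ p) :
    (leadProj V m).rank = m := by
  have h1 : (leadProj V m).trace = ((leadProj V m).rank : ℝ) :=
    trace_eq_rank_of_symm_idem _ (leadProj_isSymm V m) (leadProj_idem hV m)
  have h2 : (leadProj V m).trace = m := by
    rw [leadProj_eq V m, trace_conjV hV, projDiag_trace hm]
  have h3 : ((leadProj V m).rank : ℝ) = (m : ℝ) := by rw [← h1, h2]
  exact_mod_cast h3

lemma diag_sq {Q : Matrix (Fin p) (Fin p) ℝ} (hs : Q.IsSymm) (hi : Q * Q = Q) (j : Fin p) :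
    Q j j = ∑ i, (Q i j)^2 := by
  conv_lhs => rw [← hi]
  rw [Matrix.mul_apply]
  exact Finset.sum_congr rfl fun i _ => by rw [hs.apply i j, sq]

lemma diag_nonneg {Q : Matrix (Fin p) (Fin p) ℝ} (hs : Q.IsSymm) (hi : Q * Q = Q) (j : Fin p) :
    0 ≤ Q j j := by
  rw [diag_sq hs hi j]
  exact Finset.sum_nonneg fun i _ => sq_nonneg _

lemma diag_le_one {Q : Matrix (Fin p) (Fin p) ℝ} (hs : Q.IsSymm) (hi : Q * Q = Q) (j : Fin p) :
    Q j j ≤ 1 := by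
  have h1 := diag_sq hs hi j
  have h2 : (Q j j)^2 ≤ ∑ i, (Q i j)^2 :=
    Finset.single_le_sum (f := fun i => (Q i j)^2) (fun i _ => sq_nonneg _) (Finset.mem_univ j)
  have h3 := diag_nonneg hs hi j
  nlinarith

lemma Q_eq_projDiag {Q : Matrix (Fin p) (Fin p) ℝ} {m : ℕ}
    (hs : Q.IsSymm) (hi : Q * Q = Q)
    (hd : ∀ j, Q j j = if (j:ℕ) < m then (1:ℝ) else 0) : Q = projDiag p m := by
  have hcol : ∀ j i : Fin p, i ≠ j → Q i j = 0 := by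
    intro j i hij
    have hsq := diag_sq hs hi j
    by_cases hj : (j:ℕ) < m
    · have h1 : Q j j = 1 := by rw [hd j, if_pos hj]
      have hsplit : ∑ i ∈ Finset.univ.erase j, (Q i j)^2 + (Q j j)^2
          = ∑ i, (Q i j)^2 := Finset.sum_erase_add _ _ (Finset.mem_univ j)
      have hz : ∑ i ∈ Finset.univ.erase j, (Q i j)^2 = 0 := by
        rw [h1] at hsplit hsq; nlinarith
      have h5 := (Finset.sum_eq_zero_iff_of_nonneg
        (fun i _ => sq_nonneg (Q i j))).mp hz i (Finset.mem_erase.mpr ⟨hij, Finset.mem_univ i⟩)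
      exact pow_eq_zero_iff (two_ne_zero) |>.mp h5
    · have h0 : Q j j = 0 := by rw [hd j, if_neg hj]
      have hz : ∑ i, (Q i j)^2 = 0 := by rw [← hsq, h0]
      have h5 := (Finset.sum_eq_zero_iff_of_nonneg
        (fun i _ => sq_nonneg (Q i j))).mp hz i (Finset.mem_univ i)
      exact pow_eq_zero_iff (two_ne_zero) |>.mp h5
  ext i j
  by_cases hij : i = j
  · subst hij
    rw [hd i, projDiag]
    simp [Matrix.diagonal_apply_eq]
  · rw [hcol j i hij, projDiag, Matrix.diagonal_apply_ne _ hij]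

end QAnalysis

section KyFanMatrix
variable {p nn : ℕ} {W : Matrix (Fin p) (Fin p) ℝ} {ℓ : ℕ → ℝ}

lemma traceMulA {A : Matrix (Fin p) (Fin p) ℝ}
    (hA : A = (nn:ℝ) • (W * Matrix.diagonal (fun j : Fin p => ℓ ((j:ℕ)+1)) * Wᵀ))
    (M : Matrix (Fin p) (Fin p) ℝ) :
    Matrix.trace (M * A) = (nn:ℝ) * ∑ j, (Wᵀ * M * W) j j * ℓ ((j:ℕ)+1) := by
  rw [hA, Matrix.mul_smul, Matrix.trace_smul, smul_eq_mul]
  congr 1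
  have h1 : M * (W * Matrix.diagonal (fun j : Fin p => ℓ ((j:ℕ)+1)) * Wᵀ)
      = (M * W * Matrix.diagonal (fun j : Fin p => ℓ ((j:ℕ)+1))) * Wᵀ := by noncomm_ring
  rw [h1, Matrix.trace_mul_comm, ← Matrix.mul_assoc, ← Matrix.mul_assoc, trace_mul_diag]

lemma conjW_symm (hW : Wᵀ * W = 1) {P : Matrix (Fin p) (Fin p) ℝ} (hs : P.IsSymm) :
    (Wᵀ * P * W).IsSymm := by
  rw [Matrix.IsSymm, Matrix.transpose_mul, Matrix.transpose_mul, Matrix.transpose_transpose,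
    hs.eq, Matrix.mul_assoc]

lemma conjW_idem (hW : Wᵀ * W = 1) {P : Matrix (Fin p) (Fin p) ℝ} (hi : P * P = P) :
    (Wᵀ * P * W) * (Wᵀ * P * W) = Wᵀ * P * W := by
  have hW' : W * Wᵀ = 1 := mul_eq_one_comm.mp hW
  calc (Wᵀ * P * W) * (Wᵀ * P * W) = Wᵀ * (P * ((W * Wᵀ) * P)) * W := by noncomm_ring
  _ = Wᵀ * P * W := by rw [hW', one_mul, hi]

lemma conjW_trace {P : Matrix (Fin p) (Fin p) ℝ} (hW : Wᵀ * W = 1) :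
    Matrix.trace (Wᵀ * P * W) = Matrix.trace P := by
  have hW' : W * Wᵀ = 1 := mul_eq_one_comm.mp hW
  rw [Matrix.trace_mul_comm, ← Matrix.mul_assoc, hW', one_mul]

lemma conjW_lead (hW : Wᵀ * W = 1) (m : ℕ) :
    Wᵀ * leadProj W m * W = projDiag p m := by
  rw [leadProj_eq W m]
  calc Wᵀ * (W * projDiag p m * Wᵀ) * W = (Wᵀ * W) * projDiag p m * (Wᵀ * W) := by noncomm_ring
  _ = projDiag p m := by rw [hW, one_mul, mul_one]

lemma trace_leadProj_A {A : Matrix (Fin p) (Fin p) ℝ}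
    (hW : Wᵀ * W = 1)
    (hA : A = (nn:ℝ) • (W * Matrix.diagonal (fun j : Fin p => ℓ ((j:ℕ)+1)) * Wᵀ)) (m : ℕ) :
    Matrix.trace (leadProj W m * A)
      = (nn:ℝ) * ∑ j : Fin p, (if (j:ℕ) < m then (1:ℝ) else 0) * ℓ ((j:ℕ)+1) := by
  rw [traceMulA hA, conjW_lead hW]
  congr 1
  refine Finset.sum_congr rfl fun j _ => ?_
  rw [projDiag, Matrix.diagonal_apply_eq]

lemma kyfan_le_matrix {A P : Matrix (Fin p) (Fin p) ℝ}
    (hW : Wᵀ * W = 1)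
    (hA : A = (nn:ℝ) • (W * Matrix.diagonal (fun j : Fin p => ℓ ((j:ℕ)+1)) * Wᵀ))
    (hsort : ∀ i j : ℕ, 1 ≤ i → i ≤ j → j ≤ p → ℓ j ≤ ℓ i)
    {m : ℕ} (hm : m < p)
    (hs : P.IsSymm) (hi : P * P = P) (hr : P.rank = m) :
    Matrix.trace (P * A) ≤ Matrix.trace (leadProj W m * A) := by
  rw [traceMulA hA P, trace_leadProj_A hW hA m]
  have hQs := conjW_symm hW hs
  have hQi := conjW_idem hW hi
  have hsum : ∑ j, (Wᵀ * P * W) j j * ℓ ((j:ℕ)+1)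
      ≤ ∑ j : Fin p, (if (j:ℕ) < m then (1:ℝ) else 0) * ℓ ((j:ℕ)+1) := by
    refine kyfan_le ℓ (fun j => (Wᵀ * P * W) j j) hm hsort
      (fun j => diag_nonneg hQs hQi j) (fun j => diag_le_one hQs hQi j) ?_
    have ht : ∑ j, (Wᵀ * P * W) j j = Matrix.trace (Wᵀ * P * W) := rfl
    rw [ht, conjW_trace hW, trace_eq_rank_of_symm_idem P hs hi, hr]
  have hnn : (0:ℝ) ≤ (nn:ℝ) := Nat.cast_nonneg nn
  exact mul_le_mul_of_nonneg_left hsum hnn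

lemma kyfan_eq_matrix {A P : Matrix (Fin p) (Fin p) ℝ}
    (hW : Wᵀ * W = 1) (hnn : 1 ≤ nn)
    (hA : A = (nn:ℝ) • (W * Matrix.diagonal (fun j : Fin p => ℓ ((j:ℕ)+1)) * Wᵀ))
    (hsort : ∀ i j : ℕ, 1 ≤ i → i ≤ j → j ≤ p → ℓ j ≤ ℓ i)
    {m : ℕ} (hm : m < p) (hgap : ℓ (m+1) < ℓ m)
    (hs : P.IsSymm) (hi : P * P = P) (hr : P.rank = m)
    (heq : Matrix.trace (P * A) = Matrix.trace (leadProj W m * A)) :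
    P = leadProj W m := by
  have hW' : W * Wᵀ = 1 := mul_eq_one_comm.mp hW
  rw [traceMulA hA P, trace_leadProj_A hW hA m] at heq
  have hnz : (nn:ℝ) ≠ 0 := by positivity
  have heq2 : ∑ j, (Wᵀ * P * W) j j * ℓ ((j:ℕ)+1)
      = ∑ j : Fin p, (if (j:ℕ) < m then (1:ℝ) else 0) * ℓ ((j:ℕ)+1) :=
    mul_left_cancel₀ hnz heq
  have hQs := conjW_symm hW hs
  have hQi := conjW_idem hW hi
  have hsum : ∑ j, (Wᵀ * P * W) j j = (m:ℝ) := by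
    have ht : ∑ j, (Wᵀ * P * W) j j = Matrix.trace (Wᵀ * P * W) := rfl
    rw [ht, conjW_trace hW, trace_eq_rank_of_symm_idem P hs hi, hr]
  have hchar := kyfan_eq_char ℓ (fun j => (Wᵀ * P * W) j j) hm hsort
    (fun j => diag_nonneg hQs hQi j) (fun j => diag_le_one hQs hQi j) hsum hgap heq2
  have hQ : Wᵀ * P * W = projDiag p m := Q_eq_projDiag hQs hQi hchar
  have hback : W * (Wᵀ * P * W) * Wᵀ = P := by
    calc W * (Wᵀ * P * W) * Wᵀ = (W * Wᵀ) * P * (W * Wᵀ) := by noncomm_ring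
    _ = P := by rw [hW', one_mul, mul_one]
  rw [leadProj_eq W m, ← hQ, hback]

end KyFanMatrix

section FlagF
variable {p nn d : ℕ}

lemma flag_F (hd : 1 ≤ d) (X : Matrix (Fin p) (Fin nn) ℝ)
    (P : Fin d → Matrix (Fin p) (Fin p) ℝ)
    (hsymm : ∀ k, (P k).IsSymm) (hnest : ∀ k l : Fin d, k ≤ l → P l * P k = P k) :
    frobSq (X - ((1:ℝ)/d) • ∑ k, P k * X)
      = Matrix.trace (X * Xᵀ)
        - ∑ k : Fin d, ((2*((k:ℕ):ℝ)+1)/(d:ℝ)^2) * Matrix.trace (P k * (X * Xᵀ)) := by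
  have hdr : (0:ℝ) < (d:ℝ) := by exact_mod_cast hd
  have hmin : ∀ k l : Fin d, P k * P l = P (min k l) := by
    intro k l
    rcases le_total k l with h | h
    · have h1 := hnest k l h
      have ht := congrArg Matrix.transpose h1
      rw [Matrix.transpose_mul, (hsymm k).eq, (hsymm l).eq] at ht
      rw [ht, min_eq_left h]
    · rw [hnest l k h, min_eq_right h]
  have hBsymm : (∑ k, P k).IsSymm := by
    rw [Matrix.IsSymm, Matrix.transpose_sum]
    exact Finset.sum_congr rfl (fun k _ => (hsymm k).eq)
  rw [show (∑ k, P k * X) = (∑ k, P k) * X from (Matrix.sum_mul _ _ _).symm]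
  rw [frob_expand X (∑ k, P k) hBsymm ((1:ℝ)/d)]
  have hBA : Matrix.trace ((∑ k, P k) * (X*Xᵀ)) = ∑ k, Matrix.trace (P k * (X*Xᵀ)) := by
    rw [Finset.sum_mul, Matrix.trace_sum]
  have hBBA : Matrix.trace ((∑ k, P k) * (∑ k, P k) * (X*Xᵀ))
      = ∑ k : Fin d, (2*((d:ℝ) - ((k:ℕ):ℝ)) - 1) * Matrix.trace (P k * (X*Xᵀ)) := by
    have h1 : (∑ k, P k) * (∑ l, P l) = ∑ k : Fin d, ∑ l : Fin d, P (min k l) := by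
      rw [Finset.sum_mul]
      refine Finset.sum_congr rfl fun k _ => ?_
      rw [Finset.mul_sum]
      exact Finset.sum_congr rfl fun l _ => hmin k l
    rw [h1, Finset.sum_mul, Matrix.trace_sum]
    rw [show ∑ k : Fin d, Matrix.trace ((∑ l : Fin d, P (min k l)) * (X*Xᵀ))
        = ∑ k : Fin d, ∑ l : Fin d, Matrix.trace (P (min k l) * (X*Xᵀ)) from
      Finset.sum_congr rfl fun k _ => by rw [Finset.sum_mul, Matrix.trace_sum]]
    exact sum_min_fin (fun k => Matrix.trace (P k * (X*Xᵀ)))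
  rw [hBA, hBBA, Finset.mul_sum, Finset.mul_sum]
  rw [sub_add, ← Finset.sum_sub_distrib]
  congr 1
  refine Finset.sum_congr rfl fun k _ => ?_
  have hdnz : (d:ℝ) ≠ 0 := ne_of_gt hdr
  field_simp
  ring

end FlagF

section LeadFlag
variable {p nn d : ℕ}

lemma leadFlag_isFlag (hd : 1 ≤ d) (q : ℕ → ℕ)
    (hq : ∀ k : Fin d, 0 < q ((k:ℕ)+1) ∧ q ((k:ℕ)+1) < p)
    (hqmono : ∀ k l : Fin d, k ≤ l → q ((k:ℕ)+1) ≤ q ((l:ℕ)+1))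
    {W : Matrix (Fin p) (Fin p) ℝ} (hW : Wᵀ * W = 1) :
    IsProjFlagFin p d q (fun k : Fin d => leadProj W (q ((k:ℕ)+1))) := by
  refine ⟨fun k => leadProj_isSymm W _, fun k => leadProj_idem hW _, fun k => ?_, fun k l h => ?_⟩
  · exact leadProj_rank hW (le_of_lt (hq k).2)
  · exact leadProj_nested hW (hqmono k l h)

lemma leadFlag_min (hd : 1 ≤ d) (q : ℕ → ℕ)
    (hq : ∀ k : Fin d, 0 < q ((k:ℕ)+1) ∧ q ((k:ℕ)+1) < p)
    (hqmono : ∀ k l : Fin d, k ≤ l → q ((k:ℕ)+1) ≤ q ((l:ℕ)+1))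
    (X : Matrix (Fin p) (Fin nn) ℝ) {W : Matrix (Fin p) (Fin p) ℝ} {ℓ : ℕ → ℝ}
    (hW : Wᵀ * W = 1)
    (hA : X * Xᵀ = (nn:ℝ) • (W * Matrix.diagonal (fun j : Fin p => ℓ ((j:ℕ)+1)) * Wᵀ))
    (hsort : ∀ i j : ℕ, 1 ≤ i → i ≤ j → j ≤ p → ℓ j ≤ ℓ i)
    (P' : Fin d → Matrix (Fin p) (Fin p) ℝ) (hP' : IsProjFlagFin p d q P') :
    frobSq (X - ((1:ℝ)/d) • ∑ k : Fin d, leadProj W (q ((k:ℕ)+1)) * X)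
      ≤ frobSq (X - ((1:ℝ)/d) • ∑ k : Fin d, P' k * X) := by
  obtain ⟨hs', hi', hr', hn'⟩ := hP'
  have hflag := leadFlag_isFlag (p := p) hd q hq hqmono hW
  obtain ⟨hsL, hiL, hrL, hnL⟩ := hflag
  rw [flag_F hd X _ hsL hnL, flag_F hd X _ hs' hn']
  have hterm : ∀ k : Fin d,
      ((2*((k:ℕ):ℝ)+1)/(d:ℝ)^2) * Matrix.trace (P' k * (X * Xᵀ))
      ≤ ((2*((k:ℕ):ℝ)+1)/(d:ℝ)^2) * Matrix.trace (leadProj W (q ((k:ℕ)+1)) * (X * Xᵀ)) := by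
    intro k
    have hw : (0:ℝ) ≤ (2*((k:ℕ):ℝ)+1)/(d:ℝ)^2 := by positivity
    refine mul_le_mul_of_nonneg_left ?_ hw
    exact kyfan_le_matrix hW hA hsort (hq k).2 (hs' k) (hi' k) (hr' k)
  have := Finset.sum_le_sum (fun k (_ : k ∈ Finset.univ) => hterm k)
  linarith

end LeadFlag

/-- the flag-tricked PCA criterion admits a unique minimizing flag of
signature `(p, q_{1:d})` if and only if `ℓ_{q_k} ≠ ℓ_{q_k + 1}` for every `k = 1, …, d`,
where `ℓ_1 ≥ ⋯ ≥ ℓ_p` are the (1-indexed) eigenvalues of `S = (1/n) X Xᵀ`. -/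
theorem flag_trick_pca_unique_iff_eigengaps
    {p n d : ℕ} (hp : 2 ≤ p) (hn : 1 ≤ n) (hd : 1 ≤ d)
    (q : ℕ → ℕ) (hq1 : 0 < q 1)
    (hmono : ∀ k, 1 ≤ k → k < d → q k < q (k + 1)) (hqd : q d < p)
    (X : Matrix (Fin p) (Fin n) ℝ)
    (ℓ : ℕ → ℝ) (V : Matrix (Fin p) (Fin p) ℝ)
    (hV : Vᵀ * V = 1)
    (hsort : ∀ i j : ℕ, 1 ≤ i → i ≤ j → j ≤ p → ℓ j ≤ ℓ i)
    (hS : ((1 : ℝ) / n) • (X * Xᵀ)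
        = V * Matrix.diagonal (fun j : Fin p => ℓ ((j : ℕ) + 1)) * Vᵀ) :
    (∃! P : Fin d → Matrix (Fin p) (Fin p) ℝ,
        IsProjFlagFin p d q P ∧
        ∀ P' : Fin d → Matrix (Fin p) (Fin p) ℝ, IsProjFlagFin p d q P' →
          frobSq (X - ((1 : ℝ) / d) • ∑ k, P k * X) ≤
            frobSq (X - ((1 : ℝ) / d) • ∑ k, P' k * X))
      ↔ (∀ k, 1 ≤ k → k ≤ d → ℓ (q k) ≠ ℓ (q k + 1)) := by
  classical
  have hnz : ((n:ℝ)) ≠ 0 := by positivity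
  have hA : X * Xᵀ
      = (n:ℝ) • (V * Matrix.diagonal (fun j : Fin p => ℓ ((j : ℕ) + 1)) * Vᵀ) := by
    rw [← hS, smul_smul, mul_one_div, div_self hnz, one_smul]
  have hqmono : ∀ a b : ℕ, 1 ≤ a → a ≤ b → b ≤ d → q a ≤ q b := by
    intro a b ha hab hbd
    induction b, hab using Nat.le_induction with
    | base => exact le_rfl
    | succ b hab ih =>
      have h1 : q a ≤ q b := ih (by omega)
      have h2 : q b < q (b+1) := hmono b (by omega) (by omega)
      omega
  have hqpos : ∀ k : ℕ, 1 ≤ k → k ≤ d → 0 < q k := fun k h1 h2 =>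
    lt_of_lt_of_le hq1 (hqmono 1 k le_rfl h1 h2)
  have hqlt : ∀ k : ℕ, 1 ≤ k → k ≤ d → q k < p := fun k h1 h2 =>
    lt_of_le_of_lt (hqmono k d h1 h2 le_rfl) hqd
  have hq' : ∀ k : Fin d, 0 < q ((k:ℕ)+1) ∧ q ((k:ℕ)+1) < p := by
    intro k
    have h2 : (k:ℕ)+1 ≤ d := k.isLt
    exact ⟨hqpos _ (by omega) h2, hqlt _ (by omega) h2⟩
  have hqmonoF : ∀ k l : Fin d, k ≤ l → q ((k:ℕ)+1) ≤ q ((l:ℕ)+1) := by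
    intro k l h
    have hkl : (k:ℕ) ≤ (l:ℕ) := h
    exact hqmono _ _ (by omega) (by omega) l.isLt
  have hoptflag := leadFlag_isFlag (p := p) hd q hq' hqmonoF hV
  have hoptmin := fun P' hP' =>
    leadFlag_min hd q hq' hqmonoF X hV hA hsort P' hP'
  constructor
  · -- uniqueness implies eigengaps
    intro hex
    by_contra hgap
    push_neg at hgap
    obtain ⟨k0, hk01, hk0d, heq0⟩ := hgap
    obtain ⟨P0, _, huniq0⟩ := hex
    have hm1 : 1 ≤ q k0 := hqpos k0 hk01 hk0d
    have hmp : q k0 < p := hqlt k0 hk01 hk0d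
    set a : Fin p := ⟨q k0 - 1, by omega⟩ with ha
    set b : Fin p := ⟨q k0, hmp⟩ with hb
    set σ := Equiv.swap a b with hσ
    set V' := V.submatrix id ⇑σ with hV'def
    have hV'orth : V'ᵀ * V' = 1 := by
      rw [hV'def, Matrix.transpose_submatrix]
      have h2 := Matrix.submatrix_mul_equiv Vᵀ V (⇑σ) (Equiv.refl (Fin p)) (⇑σ)
      simp only [Equiv.coe_refl] at h2
      rw [h2, hV, Matrix.submatrix_one_equiv]
    have hDσ : (Matrix.diagonal (fun j : Fin p => ℓ ((j : ℕ) + 1))).submatrix ⇑σ ⇑σ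
        = Matrix.diagonal (fun j : Fin p => ℓ ((j : ℕ) + 1)) := by
      rw [Matrix.submatrix_diagonal_equiv]
      have hfun : ((fun j : Fin p => ℓ ((j : ℕ) + 1)) ∘ ⇑σ)
          = fun j : Fin p => ℓ ((j : ℕ) + 1) := by
        funext j
        show ℓ ((σ j : ℕ) + 1) = ℓ ((j : ℕ) + 1)
        by_cases hja : j = a
        · subst hja
          rw [hσ, Equiv.swap_apply_left]
          have e1 : (b:ℕ) + 1 = q k0 + 1 := rfl
          have e2 : (a:ℕ) + 1 = q k0 := by simp [ha]; omega
          rw [e1, e2]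
          exact heq0.symm
        · by_cases hjb : j = b
          · subst hjb
            rw [hσ, Equiv.swap_apply_right]
            have e1 : (b:ℕ) + 1 = q k0 + 1 := rfl
            have e2 : (a:ℕ) + 1 = q k0 := by simp [ha]; omega
            rw [e1, e2]
            exact heq0
          · rw [hσ, Equiv.swap_apply_of_ne_of_ne hja hjb]
      rw [hfun]
    have hA' : X * Xᵀ
        = (n:ℝ) • (V' * Matrix.diagonal (fun j : Fin p => ℓ ((j : ℕ) + 1)) * V'ᵀ) := by
      have hprod : V' * Matrix.diagonal (fun j : Fin p => ℓ ((j : ℕ) + 1)) * V'ᵀ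
          = V * Matrix.diagonal (fun j : Fin p => ℓ ((j : ℕ) + 1)) * Vᵀ := by
        rw [hV'def, Matrix.transpose_submatrix]
        conv_lhs => rw [← hDσ]
        rw [Matrix.submatrix_mul_equiv V _ id σ (⇑σ),
          Matrix.submatrix_mul_equiv _ Vᵀ id σ id, Matrix.submatrix_id_id]
      rw [hprod]
      exact hA
    have hflag' := leadFlag_isFlag (p := p) hd q hq' hqmonoF hV'orth
    have hmin' := fun P' hP' =>
      leadFlag_min hd q hq' hqmonoF X hV'orth hA' hsort P' hP'
    have e1 : (fun k : Fin d => leadProj V (q ((k:ℕ)+1))) = P0 :=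
      huniq0 _ ⟨hoptflag, hoptmin⟩
    have e2 : (fun k : Fin d => leadProj V' (q ((k:ℕ)+1))) = P0 :=
      huniq0 _ ⟨hflag', hmin'⟩
    have eQ : leadProj V (q k0) = leadProj V' (q k0) := by
      have hkf : k0 - 1 < d := by omega
      have := congrFun (e1.trans e2.symm) ⟨k0 - 1, hkf⟩
      have hk : ((⟨k0 - 1, hkf⟩ : Fin d) : ℕ) + 1 = k0 := by simp; omega
      rw [hk] at this
      exact this
    -- derive the contradiction by conjugating with V and evaluating at (a, a)
    have hL : Vᵀ * leadProj V (q k0) * V = projDiag p (q k0) := conjW_lead hV (q k0)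
    have hT : Vᵀ * V' = (1 : Matrix (Fin p) (Fin p) ℝ).submatrix id ⇑σ := by
      rw [hV'def]
      have h2 := Matrix.submatrix_mul_equiv Vᵀ V id (Equiv.refl (Fin p)) (⇑σ)
      simp only [Equiv.coe_refl] at h2
      rw [Matrix.submatrix_id_id] at h2
      rw [h2, hV]
    have hR : (Vᵀ * leadProj V' (q k0) * V) a a = 0 := by
      rw [leadProj_eq V' (q k0)]
      have hrw : Vᵀ * (V' * projDiag p (q k0) * V'ᵀ) * V
          = (Vᵀ * V') * projDiag p (q k0) * (Vᵀ * V')ᵀ := by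
        rw [Matrix.transpose_mul, Matrix.transpose_transpose]
        noncomm_ring
      rw [hrw, hT, Matrix.transpose_submatrix, Matrix.transpose_one]
      rw [Matrix.one_submatrix_mul id σ, Matrix.mul_submatrix_one σ id]
      simp only [Matrix.submatrix_apply, Function.comp_apply, id_eq]
      have hsa : σ.symm a = b := by rw [hσ, Equiv.symm_swap, Equiv.swap_apply_left]
      rw [hsa, projDiag, Matrix.diagonal_apply_eq]
      have hbv : ¬ ((b:ℕ) < q k0) := by simp [hb]
      rw [if_neg hbv]
    have hcontra := congrArg (fun M => (Vᵀ * M * V) a a) eQ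
    rw [hL, hR] at hcontra
    have haa : (projDiag p (q k0)) a a = 1 := by
      rw [projDiag, Matrix.diagonal_apply_eq]
      have : (a:ℕ) < q k0 := by simp [ha]; omega
      rw [if_pos this]
    rw [haa] at hcontra
    norm_num at hcontra
  · -- eigengaps imply uniqueness
    intro hgaps
    refine ⟨fun k : Fin d => leadProj V (q ((k:ℕ)+1)), ⟨hoptflag, hoptmin⟩, ?_⟩
    rintro P ⟨hPflag, hPmin⟩
    obtain ⟨hs, hi, hr, hnst⟩ := hPflag
    have h1 := hPmin _ hoptflag
    have h2 := hoptmin P ⟨hs, hi, hr, hnst⟩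
    rw [flag_F hd X P hs hnst, flag_F hd X _ hoptflag.1 hoptflag.2.2.2] at h1 h2
    have hle : ∀ k : Fin d, Matrix.trace (P k * (X * Xᵀ))
        ≤ Matrix.trace (leadProj V (q ((k:ℕ)+1)) * (X * Xᵀ)) := fun k =>
      kyfan_le_matrix hV hA hsort (hq' k).2 (hs k) (hi k) (hr k)
    have hsumeq : ∑ k : Fin d, ((2*((k:ℕ):ℝ)+1)/(d:ℝ)^2) *
          (Matrix.trace (leadProj V (q ((k:ℕ)+1)) * (X * Xᵀ))
            - Matrix.trace (P k * (X * Xᵀ))) = 0 := by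
      simp only [mul_sub]
      rw [Finset.sum_sub_distrib]
      linarith
    have hzero := (Finset.sum_eq_zero_iff_of_nonneg (fun k _ => by
      have hw : (0:ℝ) ≤ (2*((k:ℕ):ℝ)+1)/(d:ℝ)^2 := by positivity
      have := hle k
      nlinarith)).mp hsumeq
    funext k
    have hwpos : (0:ℝ) < (2*((k:ℕ):ℝ)+1)/(d:ℝ)^2 := by
      have hdr : (0:ℝ) < (d:ℝ) := by exact_mod_cast hd
      positivity
    have htk : Matrix.trace (P k * (X * Xᵀ))
        = Matrix.trace (leadProj V (q ((k:ℕ)+1)) * (X * Xᵀ)) := by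
      have hz := hzero k (Finset.mem_univ k)
      have := mul_eq_zero.mp hz
      rcases this with h | h
      · exact absurd h (ne_of_gt hwpos)
      · linarith
    have hk1 : 1 ≤ (k:ℕ)+1 := by omega
    have hkd : (k:ℕ)+1 ≤ d := k.isLt
    have hgapk : ℓ (q ((k:ℕ)+1) + 1) < ℓ (q ((k:ℕ)+1)) := by
      have hle' : ℓ (q ((k:ℕ)+1) + 1) ≤ ℓ (q ((k:ℕ)+1)) :=
        hsort (q ((k:ℕ)+1)) (q ((k:ℕ)+1) + 1) (hq' k).1 (Nat.le_succ _) (hq' k).2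
      exact lt_of_le_of_ne hle' (Ne.symm (hgaps _ hk1 hkd))
    exact kyfan_eq_matrix hV hn hA hsort (hq' k).2 hgapk (hs k) (hi k) (hr k) htk
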